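/- (Recursion convergence for the recurrence protocol) Define for sequences (ε_n), (τ_n) of reals in [0,1): P_n = 2ε_n² + 5ε_n⁴, Z_n = (1+τ_n⁴)/(1−τ_n⁴), Δ_n = 2Z_nP_n/(1−2Z_nP_n), and suppose the update inequalities τ_{n+2} ≤ τ_n⁴(1+3Δ_n) + ((1+Δ_n)/(1−Δ_n))(3Δ_n + P_n) and ε_{n+2} ≤ 4((1+Δ_n)/(1−Δ_n))(ε_n² + ε_n⁴) hold. If ε₀ ≤ (1/7)·(1−τ₀⁴)/(1+τ₀⁴), then the invariant Z_n ε_n ≤ 1/7 is maintained for all even n, ε_{n+2} ≤ 5ε_n², and consequently ε_n ≤ (1/5)(5ε₀)^{2^{n/2}} → 0 and τ_n → 0. -/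

import Mathlib

/-!
Write `e, t` for `ε n, τ n` and `e', t'` for `ε (n+2), τ (n+2)`. The invariant `Z e ≤ 1/7`, i.e.
`7 (1 + t⁴) e ≤ 1 - t⁴`, gives `e ≤ 1/7`, hence `Δ ≤ 2e/3` and `(1 + Δ)/(1 - Δ) ≤ 23/19`; the
update inequalities then reduce to `e' ≤ 5e²`, `t' ≤ t⁴ + 24e/5` and `t' ≤ 9t⁴/7 + 14e/5`, and
these preserve the invariant. Squaring at each step makes `ε (2k)` decay doubly exponentially.
For `τ`: once `ε` is small, the gap `1 - τ⁴` dominates `ε` and grows geometrically as long as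
`τ ≥ 1/2`, so `τ` eventually drops below `1/2`; from then on `t' ≤ t/2 + 3e`, forcing `τ → 0`.
-/

noncomputable section

open Matrix ComplexOrder

abbrev Mat (d : ℕ) := Matrix (Fin d) (Fin d) ℂ

variable {d : ℕ}

/-- The square root `Matrix.PosSemidef.sqrt` of the older Mathlib, spelled out. -/
noncomputable def psdSqrt {A : Mat d} (hA : A.PosSemidef) : Mat d :=
  hA.1.eigenvectorUnitary.1 * diagonal ((↑) ∘ (√·) ∘ hA.1.eigenvalues) *
    (star hA.1.eigenvectorUnitary : Mat d)

theorem psdSqrt_isHermitian {A : Mat d} (hA : A.PosSemidef) : (psdSqrt hA).IsHermitian := by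
  unfold psdSqrt
  rw [Matrix.star_eq_conjTranspose]
  exact Matrix.isHermitian_mul_mul_conjTranspose _
    (Matrix.isHermitian_diagonal_of_self_adjoint _ (by ext i; simp [Pi.star_apply]))

/-- Singular values of a matrix: eigenvalues of `sqrt (ρᴴ * ρ)`. -/
noncomputable def singVals (ρ : Mat d) : Fin d → ℝ :=
  (psdSqrt_isHermitian (Matrix.posSemidef_conjTranspose_mul_self ρ)).eigenvalues

/-- Schatten `p`-norm. -/
noncomputable def schattenNorm (p : ℝ) (ρ : Mat d) : ℝ :=
  (∑ i, singVals ρ i ^ p) ^ (1 / p)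

/-- Trace norm (Schatten 1-norm). -/
noncomputable def traceNorm (ρ : Mat d) : ℝ := schattenNorm 1 ρ

/-- Operator norm (largest singular value). -/
noncomputable def opNorm (ρ : Mat d) : ℝ := ⨆ i, singVals ρ i

/-- Induced `a → b` Schatten norm of a linear map on matrices. -/
noncomputable def inducedNorm (a b : ℝ) (F : Mat d →ₗ[ℂ] Mat d) : ℝ :=
  sSup {r : ℝ | ∃ σ : Mat d, σ ≠ 0 ∧ r = schattenNorm a (F σ) / schattenNorm b σ}

/-- Induced 1→1 norm, maximised over Hermitian matrices. -/
noncomputable def norm11 (F : Mat d →ₗ[ℂ] Mat d) : ℝ :=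
  sSup {r : ℝ | ∃ σ : Mat d, σ.IsHermitian ∧ σ ≠ 0 ∧ r = traceNorm (F σ) / traceNorm σ}

/-- Ergodicity coefficient. -/
noncomputable def ergCoeff (F : Mat d →ₗ[ℂ] Mat d) : ℝ :=
  sSup {r : ℝ | ∃ σ : Mat d, σ.IsHermitian ∧ σ.trace = 0 ∧ σ ≠ 0 ∧
    r = traceNorm (F σ) / traceNorm σ}

/-- A positive map sends positive semidefinite matrices to positive semidefinite matrices. -/
def IsPositiveMap (F : Mat d →ₗ[ℂ] Mat d) : Prop :=
  ∀ σ : Mat d, σ.PosSemidef → (F σ).PosSemidef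

def IsTracePreserving (F : Mat d →ₗ[ℂ] Mat d) : Prop :=
  ∀ σ : Mat d, (F σ).trace = σ.trace

/-- Ampliation `F ⊗ id_n` acting blockwise. -/
def ampliate (F : Mat d →ₗ[ℂ] Mat d) (n : ℕ)
    (M : Matrix (Fin d × Fin n) (Fin d × Fin n) ℂ) : Matrix (Fin d × Fin n) (Fin d × Fin n) ℂ :=
  Matrix.of fun p q => F (Matrix.of fun i j => M (i, p.2) (j, q.2)) p.1 q.1

def IsCompletelyPositive (F : Mat d →ₗ[ℂ] Mat d) : Prop :=
  ∀ (n : ℕ) (M : Matrix (Fin d × Fin n) (Fin d × Fin n) ℂ),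
    M.PosSemidef → (ampliate F n M).PosSemidef

/-- The conjugation map `ρ ↦ s * ρ * s`. -/
noncomputable def conjMap (s : Mat d) : Mat d →ₗ[ℂ] Mat d where
  toFun ρ := s * ρ * s
  map_add' x y := by simp [Matrix.mul_add, Matrix.add_mul]
  map_smul' c x := by simp [Matrix.mul_smul, Matrix.smul_mul]

/-- The projection onto the stationary state: `σ ↦ Tr(σ) • ρ∞`. -/
noncomputable def statProj (ρinf : Mat d) : Mat d →ₗ[ℂ] Mat d where
  toFun σ := σ.trace • ρinf
  map_add' x y := by simp [Matrix.trace_add, add_smul]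
  map_smul' c x := by simp [Matrix.trace_smul, smul_smul]

/-- `F` has spectral radius one. -/
def HasSpectralRadiusOne (F : Mat d →ₗ[ℂ] Mat d) : Prop :=
  IsGreatest {r : ℝ | ∃ μ ∈ spectrum ℂ (F : Module.End ℂ (Mat d)), r = ‖μ‖} 1

end

open Filter Topology

section RecursionStep

variable {e t e' t' P Z Δ : ℝ}

lemma div_mul_le_one_seventh_iff {x : ℝ} (hx : x < 1) :
    (1 + x) / (1 - x) * e ≤ 1 / 7 ↔ 7 * (1 + x) * e ≤ 1 - x := by
  rw [div_mul_eq_mul_div, div_le_iff₀ (by linarith)]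
  constructor <;> intro h <;> linarith

lemma two_mul_sq_add_five_mul_pow_four_le (he : 0 ≤ e) (he7 : e ≤ 1 / 7) :
    2 * e ^ 2 + 5 * e ^ 4 ≤ 103 / 49 * e ^ 2 := by
  have : e ^ 2 ≤ 1 / 49 := by nlinarith
  nlinarith [sq_nonneg e]

lemma delta_mem_Icc (he : 0 ≤ e) (he7 : e ≤ 1 / 7) (hZ : 0 ≤ Z) (hZe : Z * e ≤ 1 / 7)
    (hP : P = 2 * e ^ 2 + 5 * e ^ 4) (hΔ : Δ = 2 * Z * P / (1 - 2 * Z * P)) :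
    Δ ∈ Set.Icc 0 (2 / 3 * e) := by
  have hZP : Z * P ≤ 103 / 343 * e := by
    calc Z * P ≤ Z * (103 / 49 * e ^ 2) := by
          rw [hP]; gcongr; exact two_mul_sq_add_five_mul_pow_four_le he he7
      _ = Z * e * (103 / 49 * e) := by ring
      _ ≤ 1 / 7 * (103 / 49 * e) := by gcongr
      _ = 103 / 343 * e := by ring
  have hZP0 : 0 ≤ Z * P := mul_nonneg hZ (by rw [hP]; positivity)
  have hden : 2195 / 2401 ≤ 1 - 2 * Z * P := by nlinarith
  rw [hΔ]
  exact ⟨div_nonneg (by linarith) (by linarith), (div_le_iff₀ (by linarith)).2 (by nlinarith)⟩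

lemma one_add_div_one_sub_le (h : Δ ≤ 2 / 21) : (1 + Δ) / (1 - Δ) ≤ 23 / 19 := by
  rw [div_le_iff₀ (by linarith)]; linarith

lemma eps_next_le (he : 0 ≤ e) (he7 : e ≤ 1 / 7) (hR : (1 + Δ) / (1 - Δ) ≤ 23 / 19)
    (he' : e' ≤ 4 * ((1 + Δ) / (1 - Δ)) * (e ^ 2 + e ^ 4)) : e' ≤ 5 * e ^ 2 := by
  have hsq : e ^ 2 + e ^ 4 ≤ 50 / 49 * e ^ 2 := by
    linarith [two_mul_sq_add_five_mul_pow_four_le he he7, pow_nonneg he 4]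
  calc e' ≤ 4 * (23 / 19) * (e ^ 2 + e ^ 4) := by grw [he', hR]
    _ ≤ 5 * e ^ 2 := by nlinarith [sq_nonneg e]

lemma tau_next_le (he : 0 ≤ e) (he7 : e ≤ 1 / 7) (ht : 0 ≤ t) (ht1 : t ≤ 1)
    (hΔ0 : 0 ≤ Δ) (hΔ : Δ ≤ 2 / 3 * e) (hP : P = 2 * e ^ 2 + 5 * e ^ 4)
    (hR : (1 + Δ) / (1 - Δ) ≤ 23 / 19)
    (ht' : t' ≤ t ^ 4 * (1 + 3 * Δ) + (1 + Δ) / (1 - Δ) * (3 * Δ + P)) :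
    t' ≤ t ^ 4 + 24 / 5 * e ∧ t' ≤ 9 / 7 * t ^ 4 + 14 / 5 * e := by
  have hsum : 3 * Δ + P ≤ 789 / 343 * e := by
    have : e ^ 2 ≤ 1 / 7 * e := by nlinarith
    linarith [hP ▸ two_mul_sq_add_five_mul_pow_four_le he he7]
  have hRsum : (1 + Δ) / (1 - Δ) * (3 * Δ + P) ≤ 14 / 5 * e := by
    calc (1 + Δ) / (1 - Δ) * (3 * Δ + P) ≤ 23 / 19 * (789 / 343 * e) := by
          grw [hR, hsum]; rw [hP]; positivity
      _ ≤ 14 / 5 * e := by linarith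
  have ht4 : t ^ 4 ≤ 1 := pow_le_one₀ ht ht1
  constructor <;> nlinarith [pow_nonneg ht 4]

lemma recursion_step (he : 0 ≤ e) (ht : 0 ≤ t) (ht1 : t < 1)
    (hP : P = 2 * e ^ 2 + 5 * e ^ 4) (hZ : Z = (1 + t ^ 4) / (1 - t ^ 4))
    (hΔ : Δ = 2 * Z * P / (1 - 2 * Z * P))
    (ht' : t' ≤ t ^ 4 * (1 + 3 * Δ) + (1 + Δ) / (1 - Δ) * (3 * Δ + P))
    (he' : e' ≤ 4 * ((1 + Δ) / (1 - Δ)) * (e ^ 2 + e ^ 4)) (hZe : Z * e ≤ 1 / 7) :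
    e' ≤ 5 * e ^ 2 ∧ t' ≤ t ^ 4 + 24 / 5 * e ∧ t' ≤ 9 / 7 * t ^ 4 + 14 / 5 * e := by
  have ht4 : t ^ 4 < 1 := pow_lt_one₀ ht ht1 (by norm_num)
  have hinv := (div_mul_le_one_seventh_iff ht4).1 (hZ ▸ hZe)
  have he7 : e ≤ 1 / 7 := by nlinarith [pow_nonneg ht 4]
  have hZ0 : 0 ≤ Z := by rw [hZ]; exact div_nonneg (by positivity) (by linarith)
  obtain ⟨hΔ0, hΔe⟩ := delta_mem_Icc he he7 hZ0 hZe hP hΔ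
  have hR := one_add_div_one_sub_le (by linarith : Δ ≤ 2 / 21)
  exact ⟨eps_next_le he he7 hR he', tau_next_le he he7 ht ht1.le hΔ0 hΔe hP hR ht'⟩

lemma mul_one_sub_le_one_sub_pow_four {s : ℝ} (hs : 1 / 2 ≤ s) (hs1 : s ≤ 1) :
    30 / 17 * ((1 + s ^ 4) * (1 - s)) ≤ 1 - s ^ 4 := by
  have : 0 ≤ 13 + 9 * s + s ^ 2 - 15 * s ^ 3 := by nlinarith
  nlinarith [mul_nonneg (mul_nonneg (sub_nonneg.2 hs1) (sub_nonneg.2 hs)) this]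

lemma invariant_next (he : 0 ≤ e) (ht' : 0 ≤ t') (ht'1 : t' ≤ 1)
    (hinv : 7 * (1 + t ^ 4) * e ≤ 1 - t ^ 4) (he' : e' ≤ 5 * e ^ 2)
    (hadd : t' ≤ t ^ 4 + 24 / 5 * e) (hmul : t' ≤ 9 / 7 * t ^ 4 + 14 / 5 * e) :
    7 * (1 + t' ^ 4) * e' ≤ 1 - t' ^ 4 := by
  have ht4 : 0 ≤ t ^ 4 := by positivity
  have he7 : e ≤ 1 / 7 := by nlinarith
  have hsq : 7 * (1 + t' ^ 4) * e' ≤ 35 * e ^ 2 * (1 + t' ^ 4) := by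
    have : 0 < 1 + t' ^ 4 := by positivity
    nlinarith
  rcases le_total t' (1 / 2) with ht'h | ht'h
  · have : t' ^ 4 ≤ 1 / 16 := by
      calc t' ^ 4 ≤ (1 / 2) ^ 4 := by gcongr
        _ = 1 / 16 := by norm_num
    nlinarith
  -- `hmul` forces `1/16 ≤ t⁴` here, which sharpens the invariant to `119/16 * e ≤ 1 - t⁴`.
  · have ht16 : 1 / 16 ≤ t ^ 4 := by nlinarith
    have hgap : 211 / 80 * e ≤ 1 - t' := by nlinarith
    have he15 : e ≤ 15 / 119 := by nlinarith
    have : 119 / 6 * e ^ 2 ≤ 1 - t' := by nlinarith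
    nlinarith [mul_one_sub_le_one_sub_pow_four ht'h ht'1, pow_nonneg ht' 4]

end RecursionStep

lemma le_inv_mul_pow_two_pow {e : ℕ → ℝ} {c : ℝ} (hc : 0 < c) (he : ∀ k, 0 ≤ e k)
    (hsq : ∀ k, e (k + 1) ≤ c * e k ^ 2) (k : ℕ) : e k ≤ c⁻¹ * (c * e 0) ^ 2 ^ k := by
  induction k with
  | zero => simp [hc.ne']
  | succ k ih =>
    calc e (k + 1) ≤ c * e k ^ 2 := hsq k
      _ ≤ c * (c⁻¹ * (c * e 0) ^ 2 ^ k) ^ 2 := by gcongr; exact he k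
      _ = c⁻¹ * (c * e 0) ^ 2 ^ (k + 1) := by field_simp; ring

lemma tendsto_zero_of_le_mul_sq {e : ℕ → ℝ} {c : ℝ} (hc : 0 < c) (he : ∀ k, 0 ≤ e k)
    (hsq : ∀ k, e (k + 1) ≤ c * e k ^ 2) (h0 : c * e 0 < 1) : Tendsto e atTop (𝓝 0) := by
  have hpow := ((tendsto_pow_atTop_nhds_zero_of_lt_one (by nlinarith [he 0]) h0).comp
    (tendsto_pow_atTop_atTop_of_one_lt (one_lt_two : 1 < 2))).const_mul c⁻¹
  rw [mul_zero] at hpow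
  exact squeeze_zero he (le_inv_mul_pow_two_pow hc he hsq) hpow

lemma tendsto_zero_of_le_mul_add {a b : ℕ → ℝ} {c : ℝ} (hc0 : 0 ≤ c) (hc : c < 1)
    (ha : ∀ n, 0 ≤ a n) (hb : Tendsto b atTop (𝓝 0))
    (hab : ∀ᶠ n in atTop, a (n + 1) ≤ c * a n + b n) : Tendsto a atTop (𝓝 0) := by
  refine tendsto_order.2 ⟨fun x hx => Eventually.of_forall fun n => hx.trans_le (ha n),
    fun δ hδ => ?_⟩
  have hbδ := hb.eventually_le_const (by nlinarith : 0 < (1 - c) * δ / 2)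
  obtain ⟨N, hN⟩ := eventually_atTop.1 (hab.and hbδ)
  have hN' : ∀ j, a (N + j) ≤ c ^ j * a N + δ / 2 := by
    intro j
    induction j with
    | zero => rw [add_zero, pow_zero, one_mul]; linarith [ha N]
    | succ j ih =>
      obtain ⟨hstep, hsmall⟩ := hN (N + j) (by omega)
      calc a (N + (j + 1)) ≤ c * a (N + j) + b (N + j) := hstep
        _ ≤ c * (c ^ j * a N + δ / 2) + (1 - c) * δ / 2 := by gcongr
        _ = c ^ (j + 1) * a N + δ / 2 := by ring
  have hpow : ∀ᶠ j in atTop, c ^ j * a N < δ / 2 :=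
    Tendsto.eventually_lt_const (half_pos hδ) (by
      simpa using (tendsto_pow_atTop_nhds_zero_of_lt_one hc0 hc).mul_const (a N))
  obtain ⟨J, hJ⟩ := eventually_atTop.1 hpow
  refine eventually_atTop.2 ⟨N + J, fun n hn => ?_⟩
  obtain ⟨j, rfl⟩ := Nat.exists_eq_add_of_le (le_of_add_le_left hn)
  linarith [hN' j, hJ j (by omega)]

section GapRecursion

variable {e t : ℕ → ℝ}

lemma exists_ge_le_half (ht : ∀ k, 0 ≤ t k ∧ t k < 1) (he : ∀ k, 0 ≤ e k)
    (hsq : ∀ k, e (k + 1) ≤ 5 * e k ^ 2) (hgap : ∀ k, 7 * e k ≤ 1 - t k ^ 4)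
    (hadd : ∀ k, t (k + 1) ≤ t k ^ 4 + 24 / 5 * e k) {N : ℕ}
    (hN : ∀ k ≥ N, e k ≤ 1 / 1000) : ∃ m ≥ N, t m ≤ 1 / 2 := by
  -- One step past `N` the gap `1 - t⁴` exceeds `100 e`; from then on, while `t ≥ 1/2`, it grows
  -- by a factor `3/2` per step, which is impossible since it is at most `1`.
  by_contra! hbig
  have hgap' : ∀ k ≥ N + 1, 100 * e k ≤ 1 - t k ^ 4 := by
    intro k hk
    obtain ⟨j, rfl⟩ : ∃ j, k = j + 1 := ⟨k - 1, by omega⟩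
    have hej := hN j (by omega)
    have := pow_le_of_le_one (ht (j + 1)).1 (ht (j + 1)).2.le (by norm_num : 4 ≠ 0)
    nlinarith [hsq j, hadd j, hgap j, he j]
  have hgrow : ∀ k ≥ N + 1, 3 / 2 * (1 - t k ^ 4) ≤ 1 - t (k + 1) ^ 4 := by
    intro k hk
    obtain ⟨ht0, ht1⟩ := ht (k + 1)
    have := mul_one_sub_le_one_sub_pow_four (hbig (k + 1) (by omega)).le ht1.le
    nlinarith [hgap' k hk, hadd k, hN k (by omega),
      mul_nonneg (pow_nonneg ht0 4) (sub_nonneg.2 ht1.le)]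
  have hpow : ∀ j, (3 / 2) ^ j * (1 - t (N + 1) ^ 4) ≤ 1 - t (N + 1 + j) ^ 4 := by
    intro j
    induction j with
    | zero => simp
    | succ j ih =>
      rw [pow_succ', mul_assoc, ← add_assoc]
      exact (mul_le_mul_of_nonneg_left ih (by norm_num)).trans (hgrow _ (by omega))
  have hpos : 0 < 1 - t (N + 1) ^ 4 := by
    linarith [pow_lt_one₀ (ht (N + 1)).1 (ht (N + 1)).2 (by norm_num : 4 ≠ 0)]
  obtain ⟨j, hj⟩ := pow_unbounded_of_one_lt (1 - t (N + 1) ^ 4)⁻¹ (by norm_num : (1 : ℝ) < 3 / 2)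
  rw [inv_lt_iff_one_lt_mul₀ hpos] at hj
  linarith [hpow j, pow_nonneg (ht (N + 1 + j)).1 4]

lemma forall_ge_le_half (ht : ∀ k, 0 ≤ t k) (he : ∀ k, e k ≤ 1 / 7)
    (hmul : ∀ k, t (k + 1) ≤ 9 / 7 * t k ^ 4 + 14 / 5 * e k) {m : ℕ} (hm : t m ≤ 1 / 2) :
    ∀ k ≥ m, t k ≤ 1 / 2 := by
  intro k hk
  induction k, hk using Nat.le_induction with
  | base => exact hm
  | succ k _ ih =>
    have : t k ^ 4 ≤ 1 / 16 := by
      calc t k ^ 4 ≤ (1 / 2) ^ 4 := by gcongr; exact ht k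
        _ = 1 / 16 := by norm_num
    linarith [hmul k, he k]

theorem tendsto_zero_of_gap_recursion (ht : ∀ k, 0 ≤ t k ∧ t k < 1) (he : ∀ k, 0 ≤ e k)
    (he_lim : Tendsto e atTop (𝓝 0)) (hsq : ∀ k, e (k + 1) ≤ 5 * e k ^ 2)
    (hgap : ∀ k, 7 * e k ≤ 1 - t k ^ 4)
    (hadd : ∀ k, t (k + 1) ≤ t k ^ 4 + 24 / 5 * e k)
    (hmul : ∀ k, t (k + 1) ≤ 9 / 7 * t k ^ 4 + 14 / 5 * e k) : Tendsto t atTop (𝓝 0) := by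
  obtain ⟨N, hN⟩ :=
    eventually_atTop.1 (he_lim.eventually_le_const (by norm_num : (0 : ℝ) < 1 / 1000))
  obtain ⟨m, -, hm⟩ := exists_ge_le_half ht he hsq hgap hadd hN
  have he7 : ∀ k, e k ≤ 1 / 7 := fun k => by nlinarith [hgap k, pow_nonneg (ht k).1 4]
  have hhalf := forall_ge_le_half (fun k => (ht k).1) he7 hmul hm
  refine tendsto_zero_of_le_mul_add (b := fun k => 3 * e k) (by norm_num)
    (by norm_num : (1 / 2 : ℝ) < 1) (fun k => (ht k).1) (by simpa using he_lim.const_mul 3)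
    (eventually_atTop.2 ⟨m, fun k hk => ?_⟩)
  have htk := hhalf k hk
  have : t k ^ 4 ≤ t k / 8 := by
    have : t k ^ 3 ≤ (1 / 2) ^ 3 := by gcongr; exact (ht k).1
    nlinarith [(ht k).1]
  linarith [hmul k, he k, (ht k).1]

end GapRecursion

/-- STATEMENT 18: convergence of the coupled recursion of the recurrence protocol. -/
theorem recurrence_recursion (ε τ : ℕ → ℝ)
    (hε : ∀ n, 0 ≤ ε n ∧ ε n < 1) (hτ : ∀ n, 0 ≤ τ n ∧ τ n < 1)
    (P Z Δ : ℕ → ℝ)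
    (hP : ∀ n, P n = 2 * ε n ^ 2 + 5 * ε n ^ 4)
    (hZ : ∀ n, Z n = (1 + τ n ^ 4) / (1 - τ n ^ 4))
    (hΔ : ∀ n, Δ n = 2 * Z n * P n / (1 - 2 * Z n * P n))
    (hτrec : ∀ n, τ (n + 2) ≤
      τ n ^ 4 * (1 + 3 * Δ n) + (1 + Δ n) / (1 - Δ n) * (3 * Δ n + P n))
    (hεrec : ∀ n, ε (n + 2) ≤ 4 * ((1 + Δ n) / (1 - Δ n)) * (ε n ^ 2 + ε n ^ 4))
    (h0 : ε 0 ≤ (1 / 7) * (1 - τ 0 ^ 4) / (1 + τ 0 ^ 4)) :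
    (∀ k, Z (2 * k) * ε (2 * k) ≤ 1 / 7) ∧
    (∀ k, ε (2 * k + 2) ≤ 5 * ε (2 * k) ^ 2) ∧
    (∀ k, ε (2 * k) ≤ (1 / 5) * (5 * ε 0) ^ (2 ^ k)) ∧
    Filter.Tendsto (fun k => ε (2 * k)) Filter.atTop (nhds 0) ∧
    Filter.Tendsto (fun k => τ (2 * k)) Filter.atTop (nhds 0) := by
  have hZe_iff (n : ℕ) : Z n * ε n ≤ 1 / 7 ↔ 7 * (1 + τ n ^ 4) * ε n ≤ 1 - τ n ^ 4 :=
    hZ n ▸ div_mul_le_one_seventh_iff (pow_lt_one₀ (hτ n).1 (hτ n).2 (by norm_num))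
  have hstep (n : ℕ) (h : Z n * ε n ≤ 1 / 7) :=
    recursion_step (hε n).1 (hτ n).1 (hτ n).2 (hP n) (hZ n) (hΔ n) (hτrec n) (hεrec n) h
  have hinv (k : ℕ) : Z (2 * k) * ε (2 * k) ≤ 1 / 7 := by
    induction k with
    | zero =>
      rw [hZe_iff]
      linarith [(le_div_iff₀ (by positivity)).1 h0]
    | succ k ih =>
      obtain ⟨hsq, hadd, hmul⟩ := hstep _ ih
      rw [hZe_iff] at ih ⊢
      exact invariant_next (hε _).1 (hτ _).1 (hτ _).2.le ih hsq hadd hmul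
  have hgap (k : ℕ) : 7 * ε (2 * k) ≤ 1 - τ (2 * k) ^ 4 := by
    nlinarith [(hZe_iff _).1 (hinv k), pow_nonneg (hτ (2 * k)).1 4, (hε (2 * k)).1]
  have hsq (k : ℕ) : ε (2 * k + 2) ≤ 5 * ε (2 * k) ^ 2 := (hstep _ (hinv k)).1
  have hbound (k : ℕ) : ε (2 * k) ≤ (1 / 5) * (5 * ε 0) ^ (2 ^ k) := by
    simpa using le_inv_mul_pow_two_pow (e := fun k => ε (2 * k)) (by norm_num)
      (fun k => (hε _).1) hsq k
  have hε_lim : Tendsto (fun k => ε (2 * k)) atTop (𝓝 0) :=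
    tendsto_zero_of_le_mul_sq (by norm_num) (fun k => (hε _).1) hsq
      (by linarith [hgap 0, pow_nonneg (hτ 0).1 4])
  refine ⟨hinv, hsq, hbound, hε_lim, tendsto_zero_of_gap_recursion (fun k => hτ _)
    (fun k => (hε _).1) hε_lim hsq hgap (fun k => (hstep _ (hinv k)).2.1)
    (fun k => (hstep _ (hinv k)).2.2)⟩
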